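/- arXiv:0711.0895 — 3 statements merged into one kernel-verified Lean document; each statement's English description precedes it below -/
import Mathlib

section
/- Let F ⊂ H be a Lagrangian (maximal totally isotropic) subspace and F' a complementary isotropic subspace. For A ∈ sp(H), the normally ordered lift satisfies τ̂_{F'}(A) = τ(A) − (1/2)·trace(A^{F'}), where A^{F'} ∈ End(F') is the restriction of A to F' followed by projection onto F' along F. -/
/-!
Both sides are linear in `A`, so it suffices to compare them on a spanning set of `sp(H)`.
Since `2` is invertible, polarization shows that `sp(H)` is spanned by the rank-one maps
`E(u ⊗ u) : x ↦ 2 B(u, x) u`: expanding `x` in a basis `e` and `A x` in its `B`-dual basis `c`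
writes `A` as a combination of `E((cᵢ + A eᵢ)^{⊗2}) - E(cᵢ^{⊗2}) - E((A eᵢ)^{⊗2})`.
For `u = a + a'` with `a ∈ F`, `a' ∈ F'`, normal ordering differs from `ι(u)²` only by moving
`ι a'` to the left of `ι a`, which costs the commutator `B(a, a') h`. On the other side,
`E(u ⊗ u)^{F'}` is the rank-one map `b ↦ 2 B(u, b) a'`, whose trace is
`2 B(u, a') = 2 B(a, a')` because `F'` is isotropic.
-/

open Submodule

theorem add_mul_self_eq_of_commutator_eq {k U : Type*} [CommRing k] [Ring U] [Algebra k U]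
    {x y h : U} {c : k} (hxy : x * y - y * x = c • h) :
    (x + y) * (x + y) = x * x + (2 : k) • (y * x) + y * y + c • h := by
  rw [← hxy, two_smul]
  noncomm_ring

theorem Submodule.span_range_subtype_eq_top {R M ι : Type*} [Semiring R] [AddCommMonoid M]
    [Module R M] {p : Submodule R M} {v : ι → M} (hv : ∀ i, v i ∈ p)
    (hp : p ≤ span R (Set.range v)) :
    span R (Set.range fun i => (⟨v i, hv i⟩ : p)) = ⊤ := by
  apply map_injective_of_injective p.injective_subtype
  rw [map_span, ← Set.range_comp, map_top, range_subtype]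
  change span R (Set.range v) = p
  exact le_antisymm hp (span_le.2 (Set.range_subset_iff.2 hv)) |>.symm

namespace LinearMap

section CompressedTrace

variable {k H M : Type*} [Field k] [AddCommGroup H] [Module k H] [AddCommGroup M] [Module k M]

-- With `i` the inclusion of `F'` and `p` the projection onto `F'` along `F`,
-- this is the paper's `A ↦ tr A^{F'}`.
noncomputable def compressedTrace (p : H →ₗ[k] M) (i : M →ₗ[k] H) :
    Module.End k H →ₗ[k] k :=
  trace k M ∘ₗ llcomp k M H M p ∘ₗ lcomp k H i

@[simp]
theorem compressedTrace_apply (p : H →ₗ[k] M) (i : M →ₗ[k] H) (f : Module.End k H) :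
    compressedTrace p i f = trace k M (p ∘ₗ f ∘ₗ i) := rfl

end CompressedTrace

namespace BilinForm

variable {k H : Type*} [Field k] [AddCommGroup H] [Module k H]

-- The paper's `E(u ⊗ u)`, reducible so that it unifies with the generators as spelled in the
-- hypotheses of the main theorem.
abbrev squareEnd (B : LinearMap.BilinForm k H) (u : H) : Module.End k H :=
  (LinearMap.toSpanSingleton k H u).comp ((2 : k) • B u)

variable (B : LinearMap.BilinForm k H)

@[simp]
theorem squareEnd_apply (u x : H) : B.squareEnd u x = (2 * B u x) • u := by
  simp [squareEnd, smul_eq_mul]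

theorem squareEnd_add_sub_squareEnd_sub_squareEnd_apply (u v x : H) :
    (B.squareEnd (u + v) - B.squareEnd u - B.squareEnd v) x
      = (2 * B u x) • v + (2 * B v x) • u := by
  simp only [LinearMap.sub_apply, squareEnd_apply, map_add, LinearMap.add_apply]
  module

theorem trace_comp_squareEnd_comp {M : Type*} [AddCommGroup M] [Module k M]
    [FiniteDimensional k M]
    (p : H →ₗ[k] M) (i : M →ₗ[k] H) (u : H) :
    trace k M (p ∘ₗ B.squareEnd u ∘ₗ i) = 2 * B u (i (p u)) := by
  have : p ∘ₗ B.squareEnd u ∘ₗ i = (((2 : k) • B u) ∘ₗ i).smulRight (p u) := by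
    ext x; simp [squareEnd, smul_eq_mul]
  simp [this]

variable [FiniteDimensional k H]

theorem mem_span_range_squareEnd (hskew : ∀ x y, B x y = -B y x) (hB : B.Nondegenerate)
    (h2 : (2 : k) ≠ 0) {A : Module.End k H} (hA : ∀ x y, B (A x) y + B x (A y) = 0) :
    A ∈ span k (Set.range B.squareEnd) := by
  classical
  let e := Module.finBasis k H
  let c := B.flip.dualBasis hB.flip e
  have he : ∀ x, ∑ i, B x (c i) • A (e i) = A x := by
    intro x
    conv_rhs => rw [← e.sum_repr x, map_sum]
    simp [← dualBasis_repr_apply hB c, c]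
  have hc : ∀ x, ∑ i, B (e i) (A x) • c i = A x := by
    intro x
    conv_rhs => rw [← c.sum_repr (A x)]
    simp [c]
  have hpol : A = -(2 * 2 : k)⁻¹ •
      ∑ i, (B.squareEnd (c i + A (e i)) - B.squareEnd (c i) - B.squareEnd (A (e i))) := by
    ext x
    simp only [LinearMap.smul_apply, LinearMap.sum_apply,
      squareEnd_add_sub_squareEnd_sub_squareEnd_apply, Finset.sum_add_distrib]
    have hsum₁ : ∑ i, (2 * B (c i) x) • A (e i) = -(2 : k) • A x := by
      rw [← he x, Finset.smul_sum]
      refine Finset.sum_congr rfl fun i _ => ?_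
      rw [hskew, smul_smul, neg_mul, mul_neg]
    have hsum₂ : ∑ i, (2 * B (A (e i)) x) • c i = -(2 : k) • A x := by
      rw [← hc x, Finset.smul_sum]
      refine Finset.sum_congr rfl fun i _ => ?_
      rw [eq_neg_of_add_eq_zero_left (hA (e i) x), smul_smul, neg_mul, mul_neg]
    rw [hsum₁, hsum₂, ← add_smul, smul_smul]
    convert (one_smul k (A x)).symm using 2
    field_simp
    ring
  rw [hpol]
  exact smul_mem _ _ <| sum_mem fun i _ => sub_mem (sub_mem (subset_span ⟨_, rfl⟩)
    (subset_span ⟨_, rfl⟩)) (subset_span ⟨_, rfl⟩)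

end BilinForm

end LinearMap

theorem heisenberg_tauhat_eq_tau_sub_half_trace_general {k H U : Type*} [Field k] [CharZero k]
    [AddCommGroup H] [Module k H] [FiniteDimensional k H]
    [Ring U] [Algebra k U]
    (B : LinearMap.BilinForm k H) (hskew : ∀ x y : H, B x y = - B y x)
    (hnd : B.Nondegenerate)
    (ι : H →ₗ[k] U) (h : U)
    (hcomm : ∀ a b : H, ι a * ι b - ι b * ι a = (B a b) • h)
    (hunit : IsUnit h)
    (sp : Submodule k (Module.End k H))
    (hsp : ∀ A : Module.End k H, A ∈ sp ↔ ∀ x y : H, B (A x) y + B x (A y) = 0)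
    (hGmem : ∀ a : H,
      (LinearMap.toSpanSingleton k H a).comp ((2 : k) • (B a)) ∈ sp)
    -- F Lagrangian, F' complementary isotropic
    (F F' : Submodule k H) (hcompl : IsCompl F F')
    (hF'iso : ∀ a ∈ F', ∀ b ∈ F', B a b = 0)
    -- the projection p of H onto F' along F
    (p : H →ₗ[k] F') (hp0 : ∀ a ∈ F, p a = 0) (hp1 : ∀ b : F', p (b : H) = b)
    -- τ and the normally ordered τ̂_{F'}, determined on the generators E(u⊗u)
    (τ τhat : sp →ₗ[k] U)
    (hτ : ∀ u : H,
      τ ⟨(LinearMap.toSpanSingleton k H u).comp ((2 : k) • (B u)), hGmem u⟩ * h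
        = ι u * ι u)
    (hτhat : ∀ (a : F) (a' : F'),
      τhat ⟨(LinearMap.toSpanSingleton k H ((a : H) + (a' : H))).comp
              ((2 : k) • (B ((a : H) + (a' : H)))), hGmem _⟩ * h
        = ι (a : H) * ι (a : H) + (2 : k) • (ι (a' : H) * ι (a : H))
            + ι (a' : H) * ι (a' : H)) :
    ∀ A : sp,
      τhat A = τ A
        - ((1 / 2 : k) * LinearMap.trace k F' (p ∘ₗ A.1 ∘ₗ F'.subtype)) • (1 : U) := by
  have hspan : span k (Set.range fun u => (⟨B.squareEnd u, hGmem u⟩ : sp)) = ⊤ :=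
    span_range_subtype_eq_top hGmem fun A hA =>
      B.mem_span_range_squareEnd hskew hnd two_ne_zero ((hsp A).1 hA)
  have hgen : ∀ u : H, τhat ⟨B.squareEnd u, hGmem u⟩ = τ ⟨B.squareEnd u, hGmem u⟩ -
      ((1 / 2 : k) * LinearMap.compressedTrace p F'.subtype (B.squareEnd u)) • (1 : U) := by
    intro u
    obtain ⟨a, a', rfl⟩ : ∃ (a : F) (a' : F'), (a : H) + a' = u := by
      obtain ⟨a, ha, a', ha', hu⟩ := mem_sup.1 (hcompl.sup_eq_top ▸ mem_top : u ∈ F ⊔ F')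
      exact ⟨⟨a, ha⟩, ⟨a', ha'⟩, hu⟩
    have htr : LinearMap.compressedTrace p F'.subtype (B.squareEnd (a + a')) = 2 * B a a' := by
      rw [LinearMap.compressedTrace_apply, B.trace_comp_squareEnd_comp, map_add p, hp0 a a.2, hp1,
        zero_add, subtype_apply, map_add, LinearMap.add_apply, hF'iso a' a'.2 a' a'.2, add_zero]
    apply hunit.mul_right_cancel
    calc τhat ⟨B.squareEnd (a + a'), _⟩ * h
        = ι a * ι a + (2 : k) • (ι a' * ι a) + ι a' * ι a' := hτhat a a'
      _ = ι (a + a') * ι (a + a') - B a a' • h := by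
        rw [map_add, add_mul_self_eq_of_commutator_eq (hcomm a a'), add_sub_cancel_right]
      _ = _ := by
        rw [← hτ, htr, sub_mul, smul_mul_assoc, one_mul, one_div,
          inv_mul_cancel_left₀ two_ne_zero]
  have key := LinearMap.ext_on_range hspan (f := τhat) (g := τ -
      ((1 / 2 : k) • (LinearMap.compressedTrace p F'.subtype ∘ₗ sp.subtype)).smulRight 1) hgen
  intro A
  simpa using LinearMap.congr_fun key A

/-- For `F ⊂ H` Lagrangian, `F'` a complementary isotropic subspace and
`A ∈ sp(H)`, the normally ordered lift satisfies
`τ̂_{F'}(A) = τ(A) − (1/2)·trace(A^{F'})`, where `A^{F'} = p ∘ A ∘ incl_{F'}` with `p`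
the projection of `H` onto `F'` along `F`. -/
theorem heisenberg_tauhat_eq_tau_sub_half_trace {k H U : Type*} [Field k] [CharZero k]
    [AddCommGroup H] [Module k H] [FiniteDimensional k H]
    [Ring U] [Algebra k U]
    (B : LinearMap.BilinForm k H) (hskew : ∀ x y : H, B x y = - B y x)
    (hnd : B.Nondegenerate)
    (ι : H →ₗ[k] U) (h : U)
    (hcomm : ∀ a b : H, ι a * ι b - ι b * ι a = (B a b) • h)
    (hcentral : ∀ u : U, h * u = u * h) (hunit : IsUnit h)
    (sp : Submodule k (Module.End k H))
    (hsp : ∀ A : Module.End k H, A ∈ sp ↔ ∀ x y : H, B (A x) y + B x (A y) = 0)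
    (hGmem : ∀ a : H,
      (LinearMap.toSpanSingleton k H a).comp ((2 : k) • (B a)) ∈ sp)
    -- F Lagrangian, F' complementary isotropic
    (F F' : Submodule k H) (hcompl : IsCompl F F')
    (hFiso : ∀ a ∈ F, ∀ b ∈ F, B a b = 0)
    (hF'iso : ∀ a ∈ F', ∀ b ∈ F', B a b = 0)
    (hFmax : ∀ x : H, (∀ a ∈ F, B a x = 0) → x ∈ F)
    -- the projection p of H onto F' along F
    (p : H →ₗ[k] F') (hp0 : ∀ a ∈ F, p a = 0) (hp1 : ∀ b : F', p (b : H) = b)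
    -- τ and the normally ordered τ̂_{F'}, determined on the generators E(u⊗u)
    (τ τhat : sp →ₗ[k] U)
    (hτ : ∀ u : H,
      τ ⟨(LinearMap.toSpanSingleton k H u).comp ((2 : k) • (B u)), hGmem u⟩ * h
        = ι u * ι u)
    (hτhat : ∀ (a : F) (a' : F'),
      τhat ⟨(LinearMap.toSpanSingleton k H ((a : H) + (a' : H))).comp
              ((2 : k) • (B ((a : H) + (a' : H)))), hGmem _⟩ * h
        = ι (a : H) * ι (a : H) + (2 : k) • (ι (a' : H) * ι (a : H))
            + ι (a' : H) * ι (a' : H)) :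
    ∀ A : sp,
      τhat A = τ A
        - ((1 / 2 : k) * LinearMap.trace k F' (p ∘ₗ A.1 ∘ₗ F'.subtype)) • (1 : U) :=
  heisenberg_tauhat_eq_tau_sub_half_trace_general B hskew hnd ι h hcomm hunit sp hsp hGmem F F'
    hcompl hF'iso p hp0 hp1 τ τhat hτ hτhat
end

section
/- If A belongs to the stabilizer of F in sp(H) (i.e., A(F) ⊆ F), then the trace of the induced map on H/F equals the trace of A^{F'} and equals minus the trace of A restricted to F; consequently τ̂_{F'}(A) = τ(A) + (1/2)·trace(A|_F) is independent of the choice of the isotropic complement F'. -/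
/-!
The first two identities are trace bookkeeping. The isomorphism `H ⧸ F ≃ F'` turns the induced
map into `A^{F'}`, and writing the identity of `H` as the sum of the projections onto `F` and `F'`
gives `tr A = tr (A|_F) + tr A^{F'}`; finally `tr A = 0`, because `H ≃ H^*` conjugates `A ∈ sp(H)`
to `-Aᵀ`.

For the third, `μ = τ - τ̂_{F'}` is linear on `sp(H)`. On the element `G_u : x ↦ 2 B(u, x) u`
representing `u²`, the commutation relation gives `μ(G_u) = B(u, p u) = ½ tr(π ∘ G_u)`, where `π` is
the projection of `H` onto `F'`. The `G_u` span `sp(H)`: `4 A = Σ_i (G_{A bᵢ + bᵢ^*} - G_{A bᵢ} - G_{bᵢ^*})`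
for a basis `b` and its `B`-dual basis `b^*`. Hence `μ(A) = ½ tr(π A) = ½ tr A^{F'} = -½ tr (A|_F)`.
-/

open Module LinearMap

namespace Submodule

variable {R E : Type*} [Ring R] [AddCommGroup E] [Module R E] {p q : Submodule R E}

theorem eq_projectionOnto (h : IsCompl p q) {f : E →ₗ[R] q}
    (hp : ∀ x ∈ p, f x = 0) (hq : ∀ x : q, f x = x) : f = q.projectionOnto p h.symm := by
  refine LinearMap.ext fun x => ?_
  conv_lhs => rw [← projection_add_projection_eq_self h x]
  rw [map_add, hp _ (projection_apply_mem h x), zero_add, ← coe_projectionOnto_apply, hq]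

end Submodule

namespace LinearMap

variable {k E : Type*} [Field k] [AddCommGroup E] [Module k E] {p q : Submodule k E}

theorem trace_mapQ_eq_trace_projectionOnto_comp (h : IsCompl p q) (A : Module.End k E)
    (hA : p ≤ p.comap A) :
    trace k (E ⧸ p) (p.mapQ p A hA)
      = trace k q (q.projectionOnto p h.symm ∘ₗ A ∘ₗ q.subtype) := by
  rw [← trace_conj' _ (p.quotientEquivOfIsCompl q h)]
  rfl

theorem trace_eq_trace_restrict_add_trace_projectionOnto_comp [FiniteDimensional k E]
    (h : IsCompl p q) (A : Module.End k E) (hA : ∀ x ∈ p, A x ∈ p) :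
    trace k E A = trace k p (A.restrict hA)
      + trace k q (q.projectionOnto p h.symm ∘ₗ A ∘ₗ q.subtype) := by
  have hrestrict : p.projectionOnto q h ∘ₗ A ∘ₗ p.subtype = A.restrict hA := by
    ext x
    simp [Submodule.projection_apply_of_mem_left h (hA x x.2)]
  conv_lhs => rw [← id_comp A, ← Submodule.projection_add_projection_eq_id h, add_comp, map_add]
  rw [← hrestrict, Submodule.projection, Submodule.projection, comp_assoc, comp_assoc,
    trace_comp_comm' (p.projectionOnto q h ∘ₗ A),
    trace_comp_comm' (q.projectionOnto p h.symm ∘ₗ A), comp_assoc, comp_assoc]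

theorem map_add_mul_self {U : Type*} [Ring U] [Algebra k U] (B : LinearMap.BilinForm k E)
    (ι : E →ₗ[k] U) (z : U) (hcomm : ∀ a b, ι a * ι b - ι b * ι a = B a b • z) (a b : E) :
    ι (a + b) * ι (a + b) = ι a * ι a + (2 : k) • (ι b * ι a) + ι b * ι b + B a b • z := by
  rw [map_add, ← hcomm, two_smul]
  noncomm_ring

end LinearMap

namespace LinearMap.BilinForm

variable {k V : Type*} [Field k] [AddCommGroup V] [Module k V] (B : LinearMap.BilinForm k V)

/-- The image of `u²` under the isomorphism `Sym² V ≃ sp(V)`. -/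
def sqEnd (u : V) : Module.End k V := toSpanSingleton k V u ∘ₗ ((2 : k) • B u)

theorem sqEnd_apply (u x : V) : B.sqEnd u x = (2 * B u x) • u := rfl

theorem sqEnd_add_sub_sqEnd_sub_sqEnd_apply (u v x : V) :
    (B.sqEnd (u + v) - B.sqEnd u - B.sqEnd v) x = (2 : k) • (B u x • v + B v x • u) := by
  simp only [LinearMap.sub_apply, sqEnd_apply, map_add, LinearMap.add_apply]
  module

theorem trace_comp_sqEnd [FiniteDimensional k V] (π : Module.End k V) (u : V) :
    trace k V (π ∘ₗ B.sqEnd u) = 2 * B u (π u) := by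
  have hsmulRight : π ∘ₗ B.sqEnd u = ((2 : k) • B u).smulRight (π u) := by
    ext x
    simp [sqEnd_apply]
  rw [hsmulRight, trace_smulRight, smul_apply, smul_eq_mul]

variable {B}

theorem apply_self_eq_zero [NeZero (2 : k)] (hskew : ∀ x y, B x y = -B y x) (x : V) :
    B x x = 0 := by
  have h2 : (2 : k) * B x x = 0 := by linear_combination hskew x x
  exact (mul_eq_zero.1 h2).resolve_left two_ne_zero

theorem four_smul_eq_sum_sqEnd (hB : B.Nondegenerate) (hskew : ∀ x y, B x y = -B y x)
    {ι : Type*} [Fintype ι] [DecidableEq ι] (b : Basis ι k V)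
    {A : Module.End k V} (hA : ∀ x y, B (A x) y + B x (A y) = 0) :
    (4 : k) • A = ∑ i, (B.sqEnd (A (b i) + B.dualBasis hB b i) - B.sqEnd (A (b i))
      - B.sqEnd (B.dualBasis hB b i)) := by
  set d := B.dualBasis hB b
  have hb : ∀ x, ∑ i, B (d i) x • b i = x := fun x => by
    have hrepr := B.flip.dualBasis_repr_apply hB.flip d x
    rw [dualBasis_flip_dualBasis] at hrepr
    conv_rhs => rw [← b.sum_repr x]
    simp [hrepr]
  have hd : ∀ x, ∑ i, B x (b i) • d i = x := fun x => by
    conv_rhs => rw [← d.sum_repr x]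
    simp [d]
  have hAd : ∀ x, ∑ i, B (A (b i)) x • d i = A x := fun x => by
    conv_rhs => rw [← hd (A x)]
    refine Finset.sum_congr rfl fun i _ => ?_
    rw [hskew (A x)]
    congr 1
    linear_combination hA (b i) x
  have hAb : ∀ x, ∑ i, B (d i) x • A (b i) = A x := fun x => by
    conv_rhs => rw [← hb x]
    simp only [map_sum, map_smul]
  ext x
  simp only [LinearMap.smul_apply, LinearMap.sum_apply, sqEnd_add_sub_sqEnd_sub_sqEnd_apply,
    ← Finset.smul_sum, Finset.sum_add_distrib, hAd, hAb]
  module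

variable [FiniteDimensional k V] [NeZero (2 : k)]

theorem trace_eq_zero_of_apply_add_apply_eq_zero (hB : B.Nondegenerate) {A : Module.End k V}
    (hA : ∀ x y, B (A x) y + B x (A y) = 0) : trace k V A = 0 := by
  have hconj : (B.toDual hB).conj A = Module.Dual.transpose (-A) := by
    ext φ x
    rw [LinearEquiv.conj_apply_apply, toDual_def, Module.Dual.transpose_apply,
      LinearMap.comp_apply, LinearMap.neg_apply, map_neg, eq_neg_iff_add_eq_zero,
      ← apply_toDual_symm_apply (hB := hB) φ (A x)]
    exact hA _ _
  have hneg := trace_conj' A (B.toDual hB)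
  rw [hconj, trace_transpose', map_neg] at hneg
  have h2 : (2 : k) * trace k V A = 0 := by linear_combination -hneg
  exact (mul_eq_zero.1 h2).resolve_left two_ne_zero

theorem mem_span_range_sqEnd (hB : B.Nondegenerate) (hskew : ∀ x y, B x y = -B y x)
    {A : Module.End k V} (hA : ∀ x y, B (A x) y + B x (A y) = 0) :
    A ∈ Submodule.span k (Set.range B.sqEnd) := by
  have h4 : (4 : k) ≠ 0 := by
    simpa [show (4 : k) = 2 * 2 by norm_num] using (two_ne_zero : (2 : k) ≠ 0)
  rw [← inv_smul_smul₀ h4 A, four_smul_eq_sum_sqEnd hB hskew (Module.finBasis k V) hA]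
  refine Submodule.smul_mem _ _ (Submodule.sum_mem _ fun i _ => ?_)
  exact Submodule.sub_mem _ (Submodule.sub_mem _ (Submodule.subset_span ⟨_, rfl⟩)
    (Submodule.subset_span ⟨_, rfl⟩)) (Submodule.subset_span ⟨_, rfl⟩)

variable {S : Submodule k (Module.End k V)} {M : Type*} [AddCommGroup M] [Module k M]

theorem ext_sqEnd (hB : B.Nondegenerate) (hskew : ∀ x y, B x y = -B y x)
    (hS : ∀ X ∈ S, ∀ x y, B (X x) y + B x (X y) = 0) (hsq : ∀ u, B.sqEnd u ∈ S)
    {φ ψ : S →ₗ[k] M} (h : ∀ u, φ ⟨B.sqEnd u, hsq u⟩ = ψ ⟨B.sqEnd u, hsq u⟩) : φ = ψ := by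
  refine LinearMap.ext_on_range (eq_top_iff.2 fun X _ => ?_) h
  have hX := mem_span_range_sqEnd hB hskew (hS X X.2)
  rw [show Set.range B.sqEnd = S.subtype '' Set.range fun u => ⟨B.sqEnd u, hsq u⟩ by
    rw [← Set.range_comp]; rfl, Submodule.span_image, Submodule.mem_map] at hX
  obtain ⟨Y, hY, hYX⟩ := hX
  rwa [Subtype.ext hYX] at hY

theorem apply_eq_half_trace_comp_smul (hB : B.Nondegenerate) (hskew : ∀ x y, B x y = -B y x)
    (hS : ∀ X ∈ S, ∀ x y, B (X x) y + B x (X y) = 0) (hsq : ∀ u, B.sqEnd u ∈ S)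
    (φ : S →ₗ[k] M) (π : Module.End k V) (m : M)
    (h : ∀ u, φ ⟨B.sqEnd u, hsq u⟩ = B u (π u) • m) (X : S) :
    φ X = ((1 / 2 : k) * trace k V (π ∘ₗ X)) • m := by
  let ψ : S →ₗ[k] M := ((1 / 2 : k) • (trace k V ∘ₗ mulLeft k π ∘ₗ S.subtype)).smulRight m
  have hψ : φ = ψ := ext_sqEnd hB hskew hS hsq fun u => by
    simp only [ψ, h, smulRight_apply, LinearMap.smul_apply, LinearMap.comp_apply,
      Submodule.subtype_apply, mulLeft_apply, Module.End.mul_eq_comp, trace_comp_sqEnd,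
      smul_eq_mul]
    rw [← mul_assoc, one_div_mul_cancel two_ne_zero, one_mul]
  rw [hψ]
  rfl

end LinearMap.BilinForm

theorem heisenberg_tauhat_on_stabilizer_general {k H U : Type*} [Field k] [CharZero k]
    [AddCommGroup H] [Module k H] [FiniteDimensional k H]
    [Ring U] [Algebra k U]
    (B : LinearMap.BilinForm k H) (hskew : ∀ x y : H, B x y = - B y x)
    (hnd : B.Nondegenerate)
    (ι : H →ₗ[k] U) (h : U)
    (hcomm : ∀ a b : H, ι a * ι b - ι b * ι a = (B a b) • h)
    (hunit : IsUnit h)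
    (sp : Submodule k (Module.End k H))
    (hsp : ∀ A : Module.End k H, A ∈ sp ↔ ∀ x y : H, B (A x) y + B x (A y) = 0)
    (hGmem : ∀ a : H,
      (LinearMap.toSpanSingleton k H a).comp ((2 : k) • (B a)) ∈ sp)
    (F F' : Submodule k H) (hcompl : IsCompl F F')
    (p : H →ₗ[k] F') (hp0 : ∀ a ∈ F, p a = 0) (hp1 : ∀ b : F', p (b : H) = b)
    (τ τhat : sp →ₗ[k] U)
    (hτ : ∀ u : H,
      τ ⟨(LinearMap.toSpanSingleton k H u).comp ((2 : k) • (B u)), hGmem u⟩ * h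
        = ι u * ι u)
    (hτhat : ∀ (a : F) (a' : F'),
      τhat ⟨(LinearMap.toSpanSingleton k H ((a : H) + (a' : H))).comp
              ((2 : k) • (B ((a : H) + (a' : H)))), hGmem _⟩ * h
        = ι (a : H) * ι (a : H) + (2 : k) • (ι (a' : H) * ι (a : H))
            + ι (a' : H) * ι (a' : H))
    (A : sp) (hAF : ∀ x ∈ F, A.1 x ∈ F) :
    LinearMap.trace k (H ⧸ F) (Submodule.mapQ F F A.1 (fun x hx => hAF x hx))
        = LinearMap.trace k F' (p ∘ₗ A.1 ∘ₗ F'.subtype) ∧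
    LinearMap.trace k F' (p ∘ₗ A.1 ∘ₗ F'.subtype)
        = - LinearMap.trace k F (A.1.restrict hAF) ∧
    τhat A = τ A + ((1 / 2 : k) * LinearMap.trace k F (A.1.restrict hAF)) • (1 : U) := by
  obtain rfl : p = F'.projectionOnto F hcompl.symm := Submodule.eq_projectionOnto hcompl hp0 hp1
  have hFF' : LinearMap.trace k F' (F'.projectionOnto F hcompl.symm ∘ₗ A.1 ∘ₗ F'.subtype)
      = -LinearMap.trace k F (A.1.restrict hAF) := by
    have := trace_eq_trace_restrict_add_trace_projectionOnto_comp hcompl A.1 hAF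
    rw [B.trace_eq_zero_of_apply_add_apply_eq_zero hnd ((hsp A).1 A.2)] at this
    linear_combination -this
  have hsq (u : H) :
      (τ - τhat) ⟨B.sqEnd u, hGmem u⟩ = B u (F'.projection F hcompl.symm u) • 1 := by
    obtain ⟨a, b, rfl, -⟩ := Submodule.existsUnique_add_of_isCompl hcompl u
    have hτ' : τ ⟨B.sqEnd _, hGmem _⟩ * h = _ := hτ (a + b)
    have hτhat' : τhat ⟨B.sqEnd _, hGmem _⟩ * h = _ := hτhat a b
    have hproj : F'.projection F hcompl.symm (a + b) = b := by
      rw [Submodule.projection_apply, map_add, hp0 a a.2, hp1, zero_add]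
    rw [← hunit.mul_left_inj, LinearMap.sub_apply, sub_mul, hτ', hτhat',
      LinearMap.map_add_mul_self B ι h hcomm, hproj, map_add, LinearMap.add_apply,
      B.apply_self_eq_zero hskew, add_zero, smul_mul_assoc, one_mul, add_sub_cancel_left]
  have hμ := B.apply_eq_half_trace_comp_smul hnd hskew (fun X hX => (hsp X).1 hX) hGmem
    (τ - τhat) _ 1 hsq A
  rw [Submodule.projection, LinearMap.comp_assoc, trace_comp_comm', LinearMap.comp_assoc, hFF',
    LinearMap.sub_apply] at hμ
  refine ⟨trace_mapQ_eq_trace_projectionOnto_comp hcompl A.1 _, hFF', ?_⟩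
  rw [← sub_eq_iff_eq_add', ← neg_sub, hμ]
  module

/-- If `A ∈ sp(H)` stabilizes `F` (Lagrangian), then the trace of the
induced map on `H/F` equals the trace of `A^{F'}` and equals minus the trace of `A|_F`;
consequently `τ̂_{F'}(A) = τ(A) + (1/2)·trace(A|_F)`, independent of the isotropic
complement `F'`. -/
theorem heisenberg_tauhat_on_stabilizer {k H U : Type*} [Field k] [CharZero k]
    [AddCommGroup H] [Module k H] [FiniteDimensional k H]
    [Ring U] [Algebra k U]
    (B : LinearMap.BilinForm k H) (hskew : ∀ x y : H, B x y = - B y x)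
    (hnd : B.Nondegenerate)
    (ι : H →ₗ[k] U) (h : U)
    (hcomm : ∀ a b : H, ι a * ι b - ι b * ι a = (B a b) • h)
    (hcentral : ∀ u : U, h * u = u * h) (hunit : IsUnit h)
    (sp : Submodule k (Module.End k H))
    (hsp : ∀ A : Module.End k H, A ∈ sp ↔ ∀ x y : H, B (A x) y + B x (A y) = 0)
    (hGmem : ∀ a : H,
      (LinearMap.toSpanSingleton k H a).comp ((2 : k) • (B a)) ∈ sp)
    (F F' : Submodule k H) (hcompl : IsCompl F F')
    (hFiso : ∀ a ∈ F, ∀ b ∈ F, B a b = 0)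
    (hF'iso : ∀ a ∈ F', ∀ b ∈ F', B a b = 0)
    (hFmax : ∀ x : H, (∀ a ∈ F, B a x = 0) → x ∈ F)
    (p : H →ₗ[k] F') (hp0 : ∀ a ∈ F, p a = 0) (hp1 : ∀ b : F', p (b : H) = b)
    (τ τhat : sp →ₗ[k] U)
    (hτ : ∀ u : H,
      τ ⟨(LinearMap.toSpanSingleton k H u).comp ((2 : k) • (B u)), hGmem u⟩ * h
        = ι u * ι u)
    (hτhat : ∀ (a : F) (a' : F'),
      τhat ⟨(LinearMap.toSpanSingleton k H ((a : H) + (a' : H))).comp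
              ((2 : k) • (B ((a : H) + (a' : H)))), hGmem _⟩ * h
        = ι (a : H) * ι (a : H) + (2 : k) • (ι (a' : H) * ι (a : H))
            + ι (a' : H) * ι (a' : H))
    (A : sp) (hAF : ∀ x ∈ F, A.1 x ∈ F) :
    LinearMap.trace k (H ⧸ F) (Submodule.mapQ F F A.1 (fun x hx => hAF x hx))
        = LinearMap.trace k F' (p ∘ₗ A.1 ∘ₗ F'.subtype) ∧
    LinearMap.trace k F' (p ∘ₗ A.1 ∘ₗ F'.subtype)
        = - LinearMap.trace k F (A.1.restrict hAF) ∧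
    τhat A = τ A + ((1 / 2 : k) * LinearMap.trace k F (A.1.restrict hAF)) • (1 : U) :=
  heisenberg_tauhat_on_stabilizer_general B hskew hnd ι h hcomm hunit sp hsp hGmem F F' hcompl p hp0
    hp1 τ τhat hτ hτhat A hAF
end

section
/- For α, β ∈ Sym²(F), the commutator of the Fock-space operators satisfies [ρ(ᾱ), ρ(β)] = E_{F̄}(ᾱ)E_F(β) + (1/2)·trace_{F̄}(E_{F̄}(ᾱ)E_F(β)), where E_{F̄}(ᾱ)E_F(β) ∈ End(F̄) acts as a derivation on F(H,F) ≅ Sym_•(F̄). -/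
/-!
Put `X = ρ(σ aᵢ)`, `Y = ρ(bⱼ)` and `t = B(σ aᵢ, bⱼ)`, so that `[X, Y] = t`. Expanding gives
`[X², Y²] = 4t·XY - 2t²`. On a monomial `ρ(x̄₁)⋯ρ(x̄ₖ)v₀` the annihilator `Y` acts by Wick
contraction: it kills `v₀`, and commuting it to the right replaces one factor `ρ(x̄ₖ)` by the scalar
`B(bⱼ, x̄ₖ)`. Since `F̄` is isotropic, `X` commutes with every `ρ(x̄ₖ)` and drops into the vacated
slot, so `4t·XY` is the derivation induced by `E_{F̄}(ᾱ)E_F(β)`. By skew-symmetry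
`-2t² = ½·4t·B(bⱼ, σ aᵢ)`, which sums to half the trace.
-/

section Algebra

variable {R A : Type*} [CommRing R] [Ring A] [Algebra R A]

theorem commutator_mul_self_mul_self {X Y : A} {t : R} (h : X * Y - Y * X = t • 1) :
    X * X * (Y * Y) - Y * Y * (X * X) = (4 * t) • (X * Y) - (2 * t ^ 2) • 1 := by
  have hYX : Y * X = X * Y - t • 1 := by rw [← h]; abel
  calc X * X * (Y * Y) - Y * Y * (X * X)
      = X * (X * Y - Y * X) * Y + X * Y * (X * Y - Y * X) + (X * Y - Y * X) * Y * X
          + Y * (X * Y - Y * X) * X := by noncomm_ring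
    _ = (4 * t) • (X * Y) - (2 * t ^ 2) • 1 := by
      simp only [hYX, mul_smul_comm, smul_mul_assoc, mul_one, one_mul, mul_sub, sub_mul,
        smul_sub, smul_smul]
      module

theorem commutator_sum_smul_mul_self {ι κ : Type*} (s : Finset ι) (u : Finset κ)
    (c : ι → R) (X : ι → A) (d : κ → R) (Y : κ → A) (t : ι → κ → R)
    (h : ∀ i j, X i * Y j - Y j * X i = t i j • 1) :
    (∑ i ∈ s, c i • (X i * X i)) * (∑ j ∈ u, d j • (Y j * Y j))
        - (∑ j ∈ u, d j • (Y j * Y j)) * (∑ i ∈ s, c i • (X i * X i))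
      = ∑ i ∈ s, ∑ j ∈ u,
          (c i * d j) • ((4 * t i j) • (X i * Y j) - (2 * t i j ^ 2) • 1) := by
  rw [Finset.sum_mul_sum, Finset.sum_mul_sum, Finset.sum_comm (s := u), ← Finset.sum_sub_distrib]
  refine Finset.sum_congr rfl fun i _ => ?_
  rw [← Finset.sum_sub_distrib]
  refine Finset.sum_congr rfl fun j _ => ?_
  rw [← commutator_mul_self_mul_self (h i j)]
  simp only [smul_mul_smul_comm, mul_comm (d j), smul_sub]

end Algebra

section ListProd

variable {H A : Type*}

theorem mul_prod_map_eraseIdx [Monoid A] (ρ : H → A) {v : H} :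
    ∀ (l : List H) {k : ℕ}, k < l.length → (∀ x ∈ l, Commute (ρ v) (ρ x)) →
      ρ v * ((l.eraseIdx k).map ρ).prod = ((l.set k v).map ρ).prod
  | [], _, hk, _ => by simp at hk
  | x :: l, 0, _, _ => by simp
  | x :: l, k + 1, hk, hcomm => by
    simp only [List.eraseIdx_cons_succ, List.set_cons_succ, List.map_cons, List.prod_cons,
      ← mul_assoc, (hcomm x List.mem_cons_self).eq]
    rw [mul_assoc, mul_prod_map_eraseIdx ρ l (Nat.lt_of_succ_lt_succ hk)
      fun y hy => hcomm y (List.mem_cons_of_mem _ hy)]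

theorem mul_prod_map_of_commutator {R : Type*} [CommRing R] [Ring A] [Algebra R A]
    (ρ : H → A) (f : H → R) (Y : A) :
    ∀ l : List H, (∀ x ∈ l, Y * ρ x - ρ x * Y = f x • 1) →
      Y * (l.map ρ).prod
        = (l.map ρ).prod * Y + ∑ k : Fin l.length, f (l.get k) • ((l.eraseIdx k).map ρ).prod
  | [], _ => by simp
  | x :: l, h => by
    have hx : Y * ρ x = ρ x * Y + f x • 1 := by rw [← h x List.mem_cons_self]; abel
    have ih := mul_prod_map_of_commutator ρ f Y l fun y hy => h y (List.mem_cons_of_mem _ hy)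
    simp only [List.length_cons, Fin.sum_univ_succ, List.map_cons, List.prod_cons,
      List.get_cons_zero, List.get_cons_succ', Fin.val_zero, Fin.val_succ,
      List.eraseIdx_cons_zero, List.eraseIdx_cons_succ]
    rw [← mul_assoc, hx, add_mul, mul_assoc, ih]
    simp only [mul_add, Finset.mul_sum, mul_smul_comm, smul_mul_assoc, one_mul, mul_assoc]
    abel

end ListProd

section Fock

variable {R H M : Type*} [CommRing R] [AddCommGroup M] [Module R M]

theorem mul_apply_prod_map_vacuum (ρ : H → Module.End R M) (f : H → R) {x y : H} {v₀ : M}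
    (hy : ρ y v₀ = 0) (l : List H) (hyl : ∀ z ∈ l, ρ y * ρ z - ρ z * ρ y = f z • 1)
    (hxl : ∀ z ∈ l, Commute (ρ x) (ρ z)) :
    (ρ x * ρ y) ((l.map ρ).prod v₀)
      = ∑ k : Fin l.length, f (l.get k) • ((l.set k x).map ρ).prod v₀ := by
  rw [← Module.End.mul_apply, mul_assoc, mul_prod_map_of_commutator ρ f (ρ y) l hyl, mul_add,
    ← mul_assoc, Finset.mul_sum]
  simp only [LinearMap.add_apply, Module.End.mul_apply, hy, map_zero, zero_add,
    LinearMap.sum_apply, mul_smul_comm, LinearMap.smul_apply]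
  refine Finset.sum_congr rfl fun k _ => ?_
  rw [← Module.End.mul_apply, mul_prod_map_eraseIdx ρ l k.isLt hxl]

end Fock

section SlotLinear

variable {R H A : Type*} [CommRing R] [AddCommGroup H] [Module R H] [Ring A] [Algebra R A]

def prodMapSetₗ (ρ : H →ₗ[R] A) (l : List H) (k : ℕ) : H →ₗ[R] A :=
  LinearMap.mulLeft R ((l.take k).map ρ).prod ∘ₗ LinearMap.mulRight R ((l.drop (k + 1)).map ρ).prod
    ∘ₗ ρ

theorem prodMapSetₗ_apply (ρ : H →ₗ[R] A) {l : List H} {k : ℕ} (hk : k < l.length) (v : H) :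
    prodMapSetₗ ρ l k v = ((l.set k v).map ρ).prod := by
  rw [List.map_set, List.prod_set, if_pos (by simpa using hk), ← List.map_take, ← List.map_drop]
  simp [prodMapSetₗ, mul_assoc]

end SlotLinear

theorem fock_sym2_commutator_general {H M : Type*} [AddCommGroup H] [Module ℂ H]
    [AddCommGroup M] [Module ℂ M]
    (σ : H → H)
    (B : LinearMap.BilinForm ℂ H) (hskew : ∀ x y : H, B x y = - B y x)
    (hreal : ∀ x y : H, B (σ x) (σ y) = starRingEnd ℂ (B x y))
    (F : Submodule ℂ H) (hFiso : ∀ a ∈ F, ∀ b ∈ F, B a b = 0)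
    (ρ : H →ₗ[ℂ] Module.End ℂ M)
    (hheis : ∀ a b : H, ρ a * ρ b - ρ b * ρ a = (B a b) • (1 : Module.End ℂ M))
    (v₀ : M) (hvac : ∀ a ∈ F, ρ a v₀ = 0)
    -- α = Σᵢ cᵢ aᵢ⊗aᵢ and β = Σⱼ dⱼ bⱼ⊗bⱼ, elements of Sym²(F);
    {n m : ℕ} (a : Fin n → H) (ha : ∀ i, a i ∈ F) (c : Fin n → ℂ)
    (b : Fin m → H) (hb : ∀ j, b j ∈ F) (d : Fin m → ℂ)
    -- the endomorphism E_{F̄}(ᾱ)E_F(β) of H (it maps F̄ to F̄)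
    (D : Module.End ℂ H)
    (hD : ∀ x : H, D x = ∑ i : Fin n, ∑ j : Fin m,
      ((4 : ℂ) * starRingEnd ℂ (c i) * d j * B (σ (a i)) (b j) * B (b j) x) • σ (a i)) :
    ∀ l : List H, (∀ x ∈ l, ∃ y ∈ F, x = σ y) →
      -- [ρ(ᾱ), ρ(β)] applied to the monomial x̄₁⋯x̄ₖ v₀ …
      ((∑ i : Fin n, (starRingEnd ℂ (c i)) • (ρ (σ (a i)) * ρ (σ (a i)))) *
        (∑ j : Fin m, (d j) • (ρ (b j) * ρ (b j)))
       - (∑ j : Fin m, (d j) • (ρ (b j) * ρ (b j))) *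
        (∑ i : Fin n, (starRingEnd ℂ (c i)) • (ρ (σ (a i)) * ρ (σ (a i)))))
        (((l.map ρ).prod) v₀)
      -- … equals the derivation induced by E_{F̄}(ᾱ)E_F(β) plus (1/2) its trace on F̄
      = (∑ i : Fin l.length, (((l.set i.1 (D (l.get i))).map ρ).prod) v₀)
        + (((1 / 2 : ℂ) * ∑ i : Fin n, ∑ j : Fin m,
              (4 : ℂ) * starRingEnd ℂ (c i) * d j
                * B (σ (a i)) (b j) * B (b j) (σ (a i)))
            • ((l.map ρ).prod) v₀) := by
  intro l hl
  have hcomm : ∀ i, ∀ x ∈ l, Commute (ρ (σ (a i))) (ρ x) := by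
    intro i x hx
    obtain ⟨y, hy, rfl⟩ := hl x hx
    have h := hheis (σ (a i)) (σ y)
    rwa [hreal, hFiso _ (ha i) _ hy, map_zero, zero_smul, sub_eq_zero] at h
  have hmono : ∀ i j, (ρ (σ (a i)) * ρ (b j)) ((l.map ρ).prod v₀)
      = ∑ k : Fin l.length, B (b j) (l.get k) • ((l.set k (σ (a i))).map ρ).prod v₀ :=
    fun i j => mul_apply_prod_map_vacuum ρ (B (b j)) (hvac _ (hb j)) l
      (fun z _ => hheis _ _) (hcomm i)
  have hder : ∀ k : Fin l.length, ((l.set k (D (l.get k))).map ρ).prod v₀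
      = ∑ i : Fin n, ∑ j : Fin m,
          ((4 : ℂ) * starRingEnd ℂ (c i) * d j * B (σ (a i)) (b j) * B (b j) (l.get k)) •
            ((l.set k (σ (a i))).map ρ).prod v₀ := by
    intro k
    simp only [← prodMapSetₗ_apply ρ k.isLt, hD, map_sum, map_smul, LinearMap.sum_apply,
      LinearMap.smul_apply]
  rw [commutator_sum_smul_mul_self _ _ _ _ _ _ _ fun i j => hheis (σ (a i)) (b j)]
  simp only [LinearMap.sum_apply, LinearMap.smul_apply, LinearMap.sub_apply, Module.End.one_apply,
    hmono, hder, fun i j => hskew (b j) (σ (a i)), smul_sub, Finset.smul_sum, smul_smul,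
    Finset.sum_sub_distrib, Finset.mul_sum, Finset.sum_smul]
  rw [sub_eq_add_neg, Finset.sum_comm_cycle, ← Finset.sum_neg_distrib]
  congr 1
  · exact Finset.sum_congr rfl fun k _ => Finset.sum_congr rfl fun i _ =>
      Finset.sum_congr rfl fun j _ => by congr 1; ring
  · simp only [← Finset.sum_neg_distrib, ← neg_smul]
    exact Finset.sum_congr rfl fun i _ => Finset.sum_congr rfl fun j _ => by congr 1; ring

/-- For `α, β ∈ Sym²(F)` (written as `α = Σᵢ cᵢ aᵢ⊗aᵢ`,
`β = Σⱼ dⱼ bⱼ⊗bⱼ` with `aᵢ, bⱼ ∈ F`), the commutator of the Fock-space operators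
satisfies `[ρ(ᾱ), ρ(β)] = E_{F̄}(ᾱ)E_F(β) + (1/2)·trace_{F̄}(E_{F̄}(ᾱ)E_F(β))`,
where `E_{F̄}(ᾱ)E_F(β) ∈ End(F̄)` acts as a derivation on `F(H,F) ≅ Sym_•(F̄)`. -/
theorem fock_sym2_commutator {H M : Type*} [AddCommGroup H] [Module ℂ H]
    [FiniteDimensional ℂ H] [AddCommGroup M] [Module ℂ M]
    (σ : H → H) (hσadd : ∀ x y : H, σ (x + y) = σ x + σ y)
    (hσsmul : ∀ (c : ℂ) (x : H), σ (c • x) = (starRingEnd ℂ c) • σ x)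
    (hσinv : ∀ x : H, σ (σ x) = x)
    (B : LinearMap.BilinForm ℂ H) (hskew : ∀ x y : H, B x y = - B y x)
    (hnd : B.Nondegenerate)
    (hreal : ∀ x y : H, B (σ x) (σ y) = starRingEnd ℂ (B x y))
    (F : Submodule ℂ H) (hFiso : ∀ a ∈ F, ∀ b ∈ F, B a b = 0)
    (hpos : ∀ a ∈ F, a ≠ 0 →
      0 < (Complex.I * B a (σ a)).re ∧ (Complex.I * B a (σ a)).im = 0)
    (ρ : H →ₗ[ℂ] Module.End ℂ M)
    (hheis : ∀ a b : H, ρ a * ρ b - ρ b * ρ a = (B a b) • (1 : Module.End ℂ M))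
    (v₀ : M) (hvac : ∀ a ∈ F, ρ a v₀ = 0)
    -- α = Σᵢ cᵢ aᵢ⊗aᵢ and β = Σⱼ dⱼ bⱼ⊗bⱼ, elements of Sym²(F);
    {n m : ℕ} (a : Fin n → H) (ha : ∀ i, a i ∈ F) (c : Fin n → ℂ)
    (b : Fin m → H) (hb : ∀ j, b j ∈ F) (d : Fin m → ℂ)
    -- the endomorphism E_{F̄}(ᾱ)E_F(β) of H (it maps F̄ to F̄)
    (D : Module.End ℂ H)
    (hD : ∀ x : H, D x = ∑ i : Fin n, ∑ j : Fin m,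
      ((4 : ℂ) * starRingEnd ℂ (c i) * d j * B (σ (a i)) (b j) * B (b j) x) • σ (a i)) :
    ∀ l : List H, (∀ x ∈ l, ∃ y ∈ F, x = σ y) →
      -- [ρ(ᾱ), ρ(β)] applied to the monomial x̄₁⋯x̄ₖ v₀ …
      ((∑ i : Fin n, (starRingEnd ℂ (c i)) • (ρ (σ (a i)) * ρ (σ (a i)))) *
        (∑ j : Fin m, (d j) • (ρ (b j) * ρ (b j)))
       - (∑ j : Fin m, (d j) • (ρ (b j) * ρ (b j))) *
        (∑ i : Fin n, (starRingEnd ℂ (c i)) • (ρ (σ (a i)) * ρ (σ (a i)))))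
        (((l.map ρ).prod) v₀)
      -- … equals the derivation induced by E_{F̄}(ᾱ)E_F(β) plus (1/2) its trace on F̄
      = (∑ i : Fin l.length, (((l.set i.1 (D (l.get i))).map ρ).prod) v₀)
        + (((1 / 2 : ℂ) * ∑ i : Fin n, ∑ j : Fin m,
              (4 : ℂ) * starRingEnd ℂ (c i) * d j
                * B (σ (a i)) (b j) * B (b j) (σ (a i)))
            • ((l.map ρ).prod) v₀) :=
  fock_sym2_commutator_general σ B hskew hreal F hFiso ρ hheis v₀ hvac a ha c b hb d D hD
end
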